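/- Let β* ∈ ℝ^D (with D = C(d,2)) have s₀ nonzero entries and let 𝒹* be the maximal vertex degree of the support graph of 𝒜(β*). Let f: ℕ × ℝ_{>0} → ℝ_{≥0} be monotonically decreasing in both arguments and v* ∈ [0,∞), and let β̃ be a random vector in ℝ^D satisfying the residual tail condition P(|β̃_ℓ − β*_ℓ| > t) ≤ f(n, t) for every ℓ ∈ [D] and every t ∈ (0, 1/v*] (with 1/0 = +∞). Let T_γ: ℝ → ℝ be a generalized thresholding operator: |T_γ(z)| ≤ |z|, T_γ(z) = 0 whenever |z| ≤ γ, and |T_γ(z) − z| ≤ γ, for all z ∈ ℝ and γ ≥ 0 (applied entrywise to vectors). Then for any γ ∈ (0, 1/v*) and any α ∈ (0,1): (a) P(‖T_γ(β̃) − β*‖_1 > 6 s₀ γ) ≤ s₀·f(n, γ) + D·f(n, (1−α)γ); and (b) P(‖𝒜(T_γ(β̃) − β*)‖_{1→1} > 6 𝒹* γ) ≤ s₀·f(n, γ) + D·f(n, (1−α)γ). -/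

import Mathlib

/-!
On the event that every residual `|β̃_ℓ - β*_ℓ|` is at most `(1 - α) γ ≤ γ`, thresholding sets
every entry off the support of `β*` to zero and moves every other entry at most `2 γ` away from
`β*`. The error vector then has at most `s₀` nonzero entries, and every row of its adjacency
matrix at most `𝒹*`, all of size `≤ 2 γ`. A union bound over the `D` coordinates controls the
complementary event.
-/

open scoped BigOperators
open Matrix

namespace FCLS

/-- Edge index: pairs `(i, j)` with `i < j`. -/
abbrev EdgeIdx (d : ℕ) := {p : Fin d × Fin d // p.1 < p.2}

/-- Hollow symmetric adjacency matrix attached to an edge vector. -/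
def adjM {d : ℕ} (x : EdgeIdx d → ℝ) : Matrix (Fin d) (Fin d) ℝ :=
  Matrix.of fun i j =>
    if h : i < j then x ⟨(i, j), h⟩ else if h' : j < i then x ⟨(j, i), h'⟩ else 0

/-- Graph Laplacian of a square matrix. -/
def lapM {n : Type*} [Fintype n] [DecidableEq n] (A : Matrix n n ℝ) : Matrix n n ℝ :=
  Matrix.diagonal (fun i => ∑ j, A i j) - A

/-- Graph Laplacian of an edge vector. -/
def lap {d : ℕ} (x : EdgeIdx d → ℝ) : Matrix (Fin d) (Fin d) ℝ := lapM (adjM x)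

/-- Eigenvalues sorted in nondecreasing order (`0` when not Hermitian). -/
noncomputable def eigs {n : Type*} [Fintype n] [DecidableEq n] (A : Matrix n n ℝ) :
    Fin (Fintype.card n) → ℝ :=
  if hA : A.IsHermitian then
    (fun v : Fin (Fintype.card n) → ℝ => v ∘ Tuple.sort v)
      (hA.eigenvalues ∘ (Fintype.equivFin n).symm)
  else 0

/-- `j`-th smallest eigenvalue, `1`-indexed. -/
noncomputable def eigAsc {n : Type*} [Fintype n] [DecidableEq n] (A : Matrix n n ℝ) (j : ℕ) : ℝ :=
  if h : j - 1 < Fintype.card n then eigs A ⟨j - 1, h⟩ else 0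

/-- Laplacian coefficient `ℳ(V, w)`. -/
def lapCoeff {d K : ℕ} (V : Matrix (Fin d) (Fin K) ℝ) (w : Fin K → ℝ) : EdgeIdx d → ℝ :=
  fun e => ∑ k, w k * (V e.1.1 k - V e.1.2 k) ^ 2

/-- Support graph of an edge vector. -/
def suppGraph {d : ℕ} (x : EdgeIdx d → ℝ) : SimpleGraph (Fin d) :=
  SimpleGraph.fromRel fun i j => ∃ h : i < j, x ⟨(i, j), h⟩ ≠ 0

/-- Support graph of a square matrix. -/
def suppGraphM {d : ℕ} (A : Matrix (Fin d) (Fin d) ℝ) : SimpleGraph (Fin d) :=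
  SimpleGraph.fromRel fun i j => A i j ≠ 0

/-- Block support: edges whose endpoints lie in a common connected component
of the support graph. -/
def blockSupp {d : ℕ} (x : EdgeIdx d → ℝ) : Set (EdgeIdx d) :=
  {e | (suppGraph x).Reachable e.1.1 e.1.2}

/-- Number of vertices in the connected component of `i`. -/
noncomputable def compCard {d : ℕ} (G : SimpleGraph (Fin d)) (i : Fin d) : ℕ :=
  Nat.card {j : Fin d // G.Reachable i j}

/-- Largest connected-component size. -/
noncomputable def maxCompCard {d : ℕ} (G : SimpleGraph (Fin d)) : ℕ :=
  Finset.univ.sup fun i => compCard G i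

/-- Number of connected components. -/
noncomputable def numComp {d : ℕ} (G : SimpleGraph (Fin d)) : ℕ :=
  Nat.card G.ConnectedComponent

open Classical in
/-- Restriction of an edge vector to edges inside a vertex set. -/
noncomputable def restrictE {d : ℕ} (x : EdgeIdx d → ℝ) (S : Set (Fin d)) : EdgeIdx d → ℝ :=
  fun e => if e.1.1 ∈ S ∧ e.1.2 ∈ S then x e else 0

/-- `j`-th smallest eigenvalue (1-indexed) of the Laplacian of the adjacency
submatrix on the vertex set `S`. -/
noncomputable def subLapEig {d : ℕ} (x : EdgeIdx d → ℝ) (S : Set (Fin d)) (j : ℕ) : ℝ :=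
  letI : Fintype S := Fintype.ofFinite S
  eigAsc (lapM ((adjM x).submatrix (fun a : S => (a : Fin d)) fun a : S => (a : Fin d))) j

/-- Spectral (`ℓ2 → ℓ2` operator) norm of a matrix. -/
noncomputable def opNorm {m n : Type*} [Fintype m] [Fintype n] [DecidableEq n]
    (A : Matrix m n ℝ) : ℝ :=
  ‖LinearMap.toContinuousLinearMap (Matrix.toEuclideanLin A)‖

/-- Entrywise `ℓ1` norm of a matrix. -/
noncomputable def matL1 {m n : Type*} [Fintype m] [Fintype n] (A : Matrix m n ℝ) : ℝ :=
  ∑ i, ∑ j, |A i j|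

/-- Frobenius norm of a matrix. -/
noncomputable def frob {m n : Type*} [Fintype m] [Fintype n] (A : Matrix m n ℝ) : ℝ :=
  Real.sqrt (∑ i, ∑ j, A i j ^ 2)

/-- `ℓ1 → ℓ1` operator norm: maximal absolute row sum. -/
noncomputable def opOne {m n : Type*} [Fintype m] [Fintype n] (A : Matrix m n ℝ) : ℝ :=
  ⨆ i, ∑ j, |A i j|

/-- `ℓ2 → ℓ∞` operator norm: maximal Euclidean row norm. -/
noncomputable def twoInf {m n : Type*} [Fintype m] [Fintype n] (A : Matrix m n ℝ) : ℝ :=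
  ⨆ i, Real.sqrt (∑ j, A i j ^ 2)

/-- Max (absolute) entry of a vector. -/
noncomputable def vecMax {ι : Type*} [Fintype ι] (v : ι → ℝ) : ℝ := ⨆ i, |v i|

/-- `ℓ1` norm of a vector. -/
noncomputable def l1 {ι : Type*} [Fintype ι] (v : ι → ℝ) : ℝ := ∑ i, |v i|

/-- `ℓ2` norm of a vector. -/
noncomputable def l2 {ι : Type*} [Fintype ι] (v : ι → ℝ) : ℝ := Real.sqrt (∑ i, v i ^ 2)

/-- SCAD-like folded concave penalty `g` with (within-domain) derivative `g'`. -/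
structure SCADLike (g g' : ℝ → ℝ) (a0 a1 b1 b2 τ : ℝ) : Prop where
  a1_le_a0 : a1 ≤ a0
  a1_pos : 0 < a1
  b1_pos : 0 < b1
  b1_lt_b2 : b1 < b2
  map_zero : g 0 = 0
  mono : MonotoneOn g (Set.Ici 0)
  concave : ConcaveOn ℝ (Set.Ici 0) g
  hasDeriv : ∀ t ∈ Set.Ici (0 : ℝ), HasDerivWithinAt g (g' t) (Set.Ici 0) t
  deriv_zero : g' 0 = a0 * τ
  deriv_low : ∀ t : ℝ, 0 < t → t ≤ b1 * τ → a1 * τ ≤ g' t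
  deriv_high : ∀ t : ℝ, b2 * τ ≤ t → g' t = 0

/-- `(V, lam)` is an orthonormal eigendecomposition of `A`. -/
def IsEigenDecomp {d : ℕ} (A V : Matrix (Fin d) (Fin d) ℝ) (lam : Fin d → ℝ) : Prop :=
  Vᵀ * V = 1 ∧ ∀ k, A *ᵥ (fun i => V i k) = lam k • fun i => V i k

/-- LLA surrogate objective with weight vector `M`. -/
noncomputable def llaObj {d : ℕ} (ℓ : (EdgeIdx d → ℝ) → ℝ) (M β : EdgeIdx d → ℝ) : ℝ :=
  ℓ β + (1 / 2) * ∑ e, M e * |β e|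

/-- `out` is the output of one LLA step from `b` (for some orthonormal
eigendecomposition of `ℒ(|b|)`). -/
def LLAStep {d : ℕ} (ℓ : (EdgeIdx d → ℝ) → ℝ) (g' : ℝ → ℝ) (b out : EdgeIdx d → ℝ) : Prop :=
  ∃ V lam, IsEigenDecomp (lap fun e => |b e|) V lam ∧
    ∀ β, llaObj ℓ (lapCoeff V fun k => g' (lam k)) out ≤
      llaObj ℓ (lapCoeff V fun k => g' (lam k)) β

/-- `β` solves the weighted Lasso block-oracle problem with weights `w`. -/
def OrcLassoSol {d : ℕ} (ℓ : (EdgeIdx d → ℝ) → ℝ) (S : Set (EdgeIdx d))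
    (w β : EdgeIdx d → ℝ) : Prop :=
  (∀ e ∉ S, β e = 0) ∧
  ∀ γ : EdgeIdx d → ℝ, (∀ e ∉ S, γ e = 0) →
    ℓ β + (1 / 2) * ∑ e, w e * |β e| ≤ ℓ γ + (1 / 2) * ∑ e, w e * |γ e|

/-- The set `T_op(ρ, τ)` of weighted-Lasso-oracle solutions with small weights. -/
def TopSet {d : ℕ} (ℓ : (EdgeIdx d → ℝ) → ℝ) (S : Set (EdgeIdx d))
    (a0 τ ρ : ℝ) : Set (EdgeIdx d → ℝ) :=
  {β | ∃ w : EdgeIdx d → ℝ, (∀ e, 0 ≤ w e) ∧ (∀ e ∉ S, w e = 0) ∧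
      (∀ e, w e ≤ 2 ^ 5 * a0 * τ * ρ ^ 2) ∧ OrcLassoSol ℓ S w β}

theorem card_edgeIdx (d : ℕ) : Fintype.card (EdgeIdx d) = d.choose 2 := by
  classical
  rw [Fintype.card_subtype, Fintype.card_product_filter_lt, Fintype.card_fin]

theorem sum_abs_le_card_mul {ι : Type*} [Fintype ι] (P : ι → Prop) {g : ι → ℝ} {c : ℝ}
    (hg : ∀ i, ¬P i → g i = 0) (hc : ∀ i, |g i| ≤ c) :
    ∑ i, |g i| ≤ Nat.card {i // P i} * c := by
  classical
  calc ∑ i, |g i| = ∑ i ∈ Finset.univ.filter P, |g i| := by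
        refine (Finset.sum_filter_of_ne fun i _ hi => ?_).symm
        by_contra hP
        simp [hg i hP] at hi
    _ ≤ (Finset.univ.filter P).card • c := Finset.sum_le_card_nsmul _ _ _ fun i _ => hc i
    _ = Nat.card {i // P i} * c := by
        rw [nsmul_eq_mul, Nat.card_eq_fintype_card, Fintype.card_subtype]

theorem measure_iUnion_le_card_mul {Ω ι : Type*} [MeasurableSpace Ω] [Fintype ι]
    (μ : MeasureTheory.Measure Ω) {A : ι → Set Ω} {c : ℝ}
    (hA : ∀ i, μ (A i) ≤ ENNReal.ofReal c) :
    μ (⋃ i, A i) ≤ ENNReal.ofReal (Fintype.card ι * c) := by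
  calc μ (⋃ i, A i) ≤ ∑ i, μ (A i) := MeasureTheory.measure_iUnion_fintype_le μ A
    _ ≤ Fintype.card ι • ENNReal.ofReal c :=
        Finset.sum_le_card_nsmul _ _ _ fun i _ => hA i
    _ = ENNReal.ofReal (Fintype.card ι * c) := by
        rw [nsmul_eq_mul, ENNReal.ofReal_mul (Nat.cast_nonneg _), ENNReal.ofReal_natCast]

section Threshold

variable {T : ℝ → ℝ} {γ z b : ℝ}

theorem abs_thresh_sub_le_two_mul (hT : |T z - z| ≤ γ) (h : |z - b| ≤ γ) :
    |T z - b| ≤ 2 * γ := by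
  calc |T z - b| ≤ |T z - z| + |z - b| := abs_sub_le _ _ _
    _ ≤ 2 * γ := by linarith

theorem thresh_sub_eq_zero (hT : |z| ≤ γ → T z = 0) (hb : b = 0) (h : |z - b| ≤ γ) :
    T z - b = 0 := by
  subst hb
  rw [sub_zero] at h ⊢
  exact hT h

end Threshold

section Adjacency

variable {d : ℕ} {x y : EdgeIdx d → ℝ} {c : ℝ}

theorem adjM_eq_zero_of_not_adj (hxy : ∀ e, y e = 0 → x e = 0) {i j : Fin d}
    (h : ¬(suppGraph y).Adj i j) : adjM x i j = 0 := by
  simp only [suppGraph, SimpleGraph.fromRel_adj, not_and_or, not_or, not_exists,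
    not_not] at h
  simp only [adjM, Matrix.of_apply]
  split_ifs with hij hji
  · exact hxy _ (h.elim (fun h => absurd h hij.ne) fun h => h.1 hij)
  · exact hxy _ (h.elim (fun h => absurd h hji.ne') fun h => h.2 hji)
  · rfl

theorem abs_adjM_le (hx : ∀ e, |x e| ≤ c) (hc : 0 ≤ c) (i j : Fin d) : |adjM x i j| ≤ c := by
  simp only [adjM, Matrix.of_apply]
  split_ifs
  · exact hx _
  · exact hx _
  · simpa using hc

theorem opOne_adjM_le (hxy : ∀ e, y e = 0 → x e = 0) (hx : ∀ e, |x e| ≤ c) (hc : 0 ≤ c) :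
    opOne (adjM x) ≤
      (Finset.univ.sup fun i => Nat.card {j : Fin d // (suppGraph y).Adj i j} : ℕ) * c := by
  refine Real.iSup_le (fun i => ?_) (by positivity)
  calc ∑ j, |adjM x i j| ≤ Nat.card {j // (suppGraph y).Adj i j} * c :=
        sum_abs_le_card_mul _ (fun j => adjM_eq_zero_of_not_adj hxy) (abs_adjM_le hx hc i)
    _ ≤ _ := by
        gcongr
        exact Finset.le_sup (f := fun i => Nat.card {j // (suppGraph y).Adj i j})
          (Finset.mem_univ i)

end Adjacency

open MeasureTheory in
theorem stmt_17_general {d : ℕ}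
    (Ω : Type) [MeasurableSpace Ω] (μ : Measure Ω)
    (n : ℕ)
    (βstar : EdgeIdx d → ℝ)
    (s0 : ℕ) (hs0 : s0 = Nat.card {e : EdgeIdx d // βstar e ≠ 0})
    (degmax : ℕ) (hdeg : degmax = Finset.univ.sup
      fun i : Fin d => Nat.card {j : Fin d // (suppGraph βstar).Adj i j})
    (f : ℕ → ℝ → ℝ) (hfnn : ∀ m t, 0 ≤ f m t)
    (vstar : ℝ) (hv : 0 ≤ vstar)
    (βtil : Ω → EdgeIdx d → ℝ)
    (htail : ∀ (e : EdgeIdx d) (t : ℝ), 0 < t → vstar * t ≤ 1 →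
      μ {ω | t < |βtil ω e - βstar e|} ≤ ENNReal.ofReal (f n t))
    (T : ℝ → ℝ → ℝ)
    (hT2 : ∀ γ z : ℝ, 0 ≤ γ → |z| ≤ γ → T γ z = 0)
    (hT3 : ∀ γ z : ℝ, 0 ≤ γ → |T γ z - z| ≤ γ)
    (γ α : ℝ) (hγ : 0 < γ) (hγv : vstar * γ < 1) (hα0 : 0 < α) (hα1 : α < 1) :
    μ {ω | 6 * s0 * γ < ∑ e, |T γ (βtil ω e) - βstar e|}
      ≤ ENNReal.ofReal (s0 * f n γ + (d.choose 2 : ℝ) * f n ((1 - α) * γ)) ∧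
    μ {ω | 6 * degmax * γ < opOne (adjM fun e => T γ (βtil ω e) - βstar e)}
      ≤ ENNReal.ofReal (s0 * f n γ + (d.choose 2 : ℝ) * f n ((1 - α) * γ)) := by
  set γ' := (1 - α) * γ
  have hγ' : 0 < γ' := mul_pos (by linarith) hγ
  have hγ'γ : γ' ≤ γ := by nlinarith
  -- A union bound at the single level `(1 - α) γ` suffices; the `s0 f(n, γ)` term is slack.
  have hbad : μ {ω | ∃ e, γ' < |βtil ω e - βstar e|}
      ≤ ENNReal.ofReal (s0 * f n γ + (d.choose 2 : ℝ) * f n γ') := by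
    rw [Set.ofPred_exists, ← card_edgeIdx]
    refine (measure_iUnion_le_card_mul μ fun e => htail e γ' hγ' ?_).trans ?_
    · nlinarith
    · exact ENNReal.ofReal_le_ofReal (le_add_of_nonneg_left (by have := hfnn n γ; positivity))
  have hgood : ∀ ω, ¬(∃ e, γ' < |βtil ω e - βstar e|) →
      (∀ e, βstar e = 0 → T γ (βtil ω e) - βstar e = 0) ∧
        ∀ e, |T γ (βtil ω e) - βstar e| ≤ 2 * γ := by
    intro ω hω
    push Not at hω
    exact ⟨fun e he => thresh_sub_eq_zero (hT2 γ _ hγ.le) he ((hω e).trans hγ'γ),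
      fun e => abs_thresh_sub_le_two_mul (hT3 γ _ hγ.le) ((hω e).trans hγ'γ)⟩
  refine ⟨(measure_mono fun ω hω => ?_).trans hbad, (measure_mono fun ω hω => ?_).trans hbad⟩
    <;> by_contra hω'
    <;> obtain ⟨hzero, hbound⟩ := hgood ω hω'
  · have hl1 := sum_abs_le_card_mul (fun e => βstar e ≠ 0) (fun e he => hzero e (not_not.1 he))
      hbound
    rw [← hs0] at hl1
    rw [Set.mem_ofPred_eq] at hω
    nlinarith [(Nat.cast_nonneg s0 : (0 : ℝ) ≤ s0)]
  · have hrows := opOne_adjM_le hzero hbound (by positivity)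
    rw [← hdeg] at hrows
    rw [Set.mem_ofPred_eq] at hω
    nlinarith [(Nat.cast_nonneg degmax : (0 : ℝ) ≤ degmax)]

open MeasureTheory in
/-- error bounds after generalized thresholding of an estimator
satisfying a residual tail condition. -/
theorem stmt_17 {d : ℕ} (hd : 2 ≤ d)
    (Ω : Type) [MeasurableSpace Ω] (μ : Measure Ω) [IsProbabilityMeasure μ]
    (n : ℕ) (hn : 0 < n)
    (βstar : EdgeIdx d → ℝ)
    (s0 : ℕ) (hs0 : s0 = Nat.card {e : EdgeIdx d // βstar e ≠ 0})
    (degmax : ℕ) (hdeg : degmax = Finset.univ.sup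
      fun i : Fin d => Nat.card {j : Fin d // (suppGraph βstar).Adj i j})
    (f : ℕ → ℝ → ℝ) (hfnn : ∀ m t, 0 ≤ f m t)
    (hfmono1 : ∀ m1 m2 : ℕ, m1 ≤ m2 → ∀ t : ℝ, 0 < t → f m2 t ≤ f m1 t)
    (hfmono2 : ∀ (m : ℕ) (t1 t2 : ℝ), 0 < t1 → t1 ≤ t2 → f m t2 ≤ f m t1)
    (vstar : ℝ) (hv : 0 ≤ vstar)
    (βtil : Ω → EdgeIdx d → ℝ)
    (htail : ∀ (e : EdgeIdx d) (t : ℝ), 0 < t → vstar * t ≤ 1 →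
      μ {ω | t < |βtil ω e - βstar e|} ≤ ENNReal.ofReal (f n t))
    (T : ℝ → ℝ → ℝ)
    (hT1 : ∀ γ z : ℝ, 0 ≤ γ → |T γ z| ≤ |z|)
    (hT2 : ∀ γ z : ℝ, 0 ≤ γ → |z| ≤ γ → T γ z = 0)
    (hT3 : ∀ γ z : ℝ, 0 ≤ γ → |T γ z - z| ≤ γ)
    (γ α : ℝ) (hγ : 0 < γ) (hγv : vstar * γ < 1) (hα0 : 0 < α) (hα1 : α < 1) :
    μ {ω | 6 * s0 * γ < ∑ e, |T γ (βtil ω e) - βstar e|}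
      ≤ ENNReal.ofReal (s0 * f n γ + (d.choose 2 : ℝ) * f n ((1 - α) * γ)) ∧
    μ {ω | 6 * degmax * γ < opOne (adjM fun e => T γ (βtil ω e) - βstar e)}
      ≤ ENNReal.ofReal (s0 * f n γ + (d.choose 2 : ℝ) * f n ((1 - α) * γ)) :=
  stmt_17_general Ω μ n βstar s0 hs0 degmax hdeg f hfnn vstar hv βtil htail T hT2 hT3 γ α hγ hγv hα0
    hα1

end FCLS
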